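/- Let p ≥ 1 and let n_1,...,n_p be integers with n_j ≥ 1 and s = n_1+...+n_p ≥ p. Then the sum over r from 1 to p of (r-1)! times the sum over ordered partitions J_1 ⊎ ... ⊎ J_r of {1,...,p} (ordered by minima) of (s-p)! times the product over i=1..r of [ (N_i - 2)! (N_i - |J_i|) / (N_i - |J_i|)! ], where N_i = sum of n_k over k ∈ J_i, equals (s-1)!. Here any term containing a factorial of a negative integer is interpreted as zero. -/

import Mathlib

/-!
Write `e k = n k - 1` and `e_B = ∑_{k ∈ B} e k`. The factor of a block `B` is then the rising
factorial `(e_B)^(|B|-1)`, and after regrouping by `r = |P|` the claim reads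
`(s-p)! · F(univ) = (s-1)!`, where `F(S) = ∑_P (|P|-1)! ∏_{B ∈ P} (e_B)^(|B|-1)` runs over the
partitions `P` of `S`. We show `F(S) = (e_S + 1)^(|S|-1)` by induction on `e_S + |S|`.
If `e` vanishes on `S`, only the partition into singletons contributes. Otherwise pick `a` with
`e a > 0`: the Pascal rule `(m+1)^(k) = m^(k) + k (m+1)^(k-1)` splits the factor of the block of
`a` into the same factor with `e a` lowered by one, plus one term for each other `j` in that
block, namely the factor of the block with `a` removed and `e a` added to `e j`. Removing `a`
from its block is a bijection from the partitions of `S` in which `a` and `j` share a block onto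
the partitions of `S \ {a}`, so `F` obeys the same Pascal recursion as `(e_S + 1)^(|S|-1)`.
-/

open MvPolynomial Finset

/-- `P` is a set partition of the finset `S`: its parts are nonempty, pairwise
disjoint, and their union is `S`. -/
abbrev IsSetPartition {α : Type*} [DecidableEq α] (S : Finset α)
    (P : Finset (Finset α)) : Prop :=
  (∀ B ∈ P, B.Nonempty) ∧ (∀ B ∈ P, ∀ B' ∈ P, B ≠ B' → Disjoint B B') ∧
    P.sup id = S

/-- The finset of all set partitions of a finset `S` in a finite type. -/
def partitionsOf {α : Type*} [Fintype α] [DecidableEq α] (S : Finset α) :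
    Finset (Finset (Finset α)) :=
  Finset.univ.filter (IsSetPartition S)

open Function
open scoped Nat

theorem Nat.add_one_ascFactorial_eq_add (m k : ℕ) :
    (m + 1).ascFactorial k = m.ascFactorial k + k * (m + 1).ascFactorial (k - 1) := by
  cases k with
  | zero => simp
  | succ k =>
    rw [Nat.ascFactorial_succ, Nat.ascFactorial_succ, ← Nat.succ_ascFactorial m k,
      Nat.add_sub_cancel]
    ring

section SumUpdate

variable {ι : Type*} [DecidableEq ι] {s : Finset ι} {f : ι → ℕ} {i j : ι}

theorem Finset.sum_update_pred_add_one (hi : i ∈ s) (hfi : f i ≠ 0) :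
    ∑ k ∈ s, update f i (f i - 1) k + 1 = ∑ k ∈ s, f k := by
  rw [sum_update_of_mem hi, sdiff_singleton_eq_erase, ← add_sum_erase s f hi]
  omega

theorem Finset.sum_erase_update_add (hj : j ∈ s.erase i) (hi : i ∈ s) :
    ∑ k ∈ s.erase i, update f j (f j + f i) k = ∑ k ∈ s, f k := by
  rw [sum_update_of_mem hj, sdiff_singleton_eq_erase, ← sum_erase_add s f hi,
    ← add_sum_erase _ f hj]
  ring

end SumUpdate

variable {α : Type*} [DecidableEq α]

theorem mem_partitionsOf [Fintype α] {S : Finset α} {P : Finset (Finset α)} :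
    P ∈ partitionsOf S ↔ IsSetPartition S P := by
  simp [partitionsOf]

theorem isSetPartition_image_singleton (S : Finset α) :
    IsSetPartition S (S.image singleton) := by
  refine ⟨?_, ?_, ?_⟩
  · simp
  · simp only [mem_image]
    rintro _ ⟨x, -, rfl⟩ _ ⟨y, -, rfl⟩ hxy
    exact disjoint_singleton.mpr fun h => hxy (h ▸ rfl)
  · ext x
    simp

def blockOf (P : Finset (Finset α)) (x : α) : Finset α :=
  {B ∈ P | x ∈ B}.sup id

def eraseFromBlock (P : Finset (Finset α)) (a : α) : Finset (Finset α) :=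
  insert ((blockOf P a).erase a) (P.erase (blockOf P a))

def insertIntoBlock (P : Finset (Finset α)) (a j : α) : Finset (Finset α) :=
  insert (insert a (blockOf P j)) (P.erase (blockOf P j))

namespace IsSetPartition

variable {S B B' C : Finset α} {P : Finset (Finset α)} {a j x : α}

theorem subset (hP : IsSetPartition S P) (hB : B ∈ P) : B ⊆ S :=
  hP.2.2 ▸ le_sup (f := id) hB

theorem exists_mem (hP : IsSetPartition S P) (hx : x ∈ S) : ∃ B ∈ P, x ∈ B := by
  rw [← hP.2.2] at hx
  simpa using mem_sup.mp hx

theorem eq_of_mem (hP : IsSetPartition S P) (hB : B ∈ P) (hC : C ∈ P) (hxB : x ∈ B)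
    (hxC : x ∈ C) : B = C := by
  by_contra h
  exact disjoint_left.mp (hP.2.1 B hB C hC h) hxB hxC

theorem card_mem_Icc (hP : IsSetPartition S P) (hS : S.Nonempty) : #P ∈ Icc 1 #S := by
  obtain ⟨x, hx⟩ := hS
  obtain ⟨B, hB, -⟩ := hP.exists_mem hx
  refine mem_Icc.mpr ⟨card_pos.mpr ⟨B, hB⟩, ?_⟩
  have h := card_le_card_biUnion (s := P) (f := id) (fun B hB C hC => hP.2.1 B hB C hC) hP.1
  rwa [← sup_eq_biUnion, hP.2.2] at h

theorem eq_image_singleton (hP : IsSetPartition S P) (h : ∀ B ∈ P, #B ≤ 1) :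
    P = S.image singleton := by
  have hsingle : ∀ B ∈ P, ∃ x, B = {x} := fun B hB =>
    card_eq_one.mp (le_antisymm (h B hB) (hP.1 B hB).card_pos)
  ext B
  rw [mem_image]
  constructor
  · intro hB
    obtain ⟨x, rfl⟩ := hsingle B hB
    exact ⟨x, hP.subset hB (mem_singleton_self x), rfl⟩
  · rintro ⟨x, hx, rfl⟩
    obtain ⟨C, hC, hxC⟩ := hP.exists_mem hx
    obtain ⟨y, rfl⟩ := hsingle C hC
    rwa [mem_singleton.mp hxC]

theorem sup_erase (hP : IsSetPartition S P) (hB : B ∈ P) : (P.erase B).sup id = S \ B := by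
  ext x
  simp only [mem_sup, mem_erase, id, mem_sdiff]
  constructor
  · rintro ⟨C, ⟨hCB, hC⟩, hxC⟩
    exact ⟨hP.subset hC hxC, fun hxB => hCB (hP.eq_of_mem hC hB hxC hxB)⟩
  · rintro ⟨hxS, hxB⟩
    obtain ⟨C, hC, hxC⟩ := hP.exists_mem hxS
    exact ⟨C, ⟨fun h => hxB (h ▸ hxC), hC⟩, hxC⟩

theorem replace (hP : IsSetPartition S P) (hB : B ∈ P) (hB' : B'.Nonempty)
    (hdisj : ∀ C ∈ P.erase B, Disjoint B' C) :
    IsSetPartition (B' ∪ S \ B) (insert B' (P.erase B)) := by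
  refine ⟨?_, ?_, ?_⟩
  · rintro C hC
    rcases mem_insert.mp hC with rfl | hC
    exacts [hB', hP.1 C (mem_of_mem_erase hC)]
  · rintro C hC D hD hCD
    rcases mem_insert.mp hC with rfl | hC' <;> rcases mem_insert.mp hD with rfl | hD'
    · exact absurd rfl hCD
    · exact hdisj D hD'
    · exact (hdisj C hC').symm
    · exact hP.2.1 C (mem_of_mem_erase hC') D (mem_of_mem_erase hD') hCD
  · rw [sup_insert, hP.sup_erase hB]
    rfl

theorem notMem_erase_of_disjoint (hB' : B'.Nonempty) (hdisj : ∀ C ∈ P.erase B, Disjoint B' C) :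
    B' ∉ P.erase B := fun h =>
  hB'.ne_empty ((disjoint_self_iff_empty B').mp (hdisj B' h))

theorem blockOf_eq (hP : IsSetPartition S P) (hB : B ∈ P) (hx : x ∈ B) : blockOf P x = B := by
  have h : {C ∈ P | x ∈ C} = {B} := by
    ext C
    simp only [mem_filter, mem_singleton]
    exact ⟨fun ⟨hC, hxC⟩ => hP.eq_of_mem hC hB hxC hx, by rintro rfl; exact ⟨hB, hx⟩⟩
  rw [blockOf, h, sup_singleton, id]

theorem blockOf_mem (hP : IsSetPartition S P) (hx : x ∈ S) : blockOf P x ∈ P := by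
  obtain ⟨B, hB, hxB⟩ := hP.exists_mem hx
  rwa [hP.blockOf_eq hB hxB]

theorem mem_blockOf (hP : IsSetPartition S P) (hx : x ∈ S) : x ∈ blockOf P x := by
  obtain ⟨B, hB, hxB⟩ := hP.exists_mem hx
  rwa [hP.blockOf_eq hB hxB]

theorem disjoint_erase_blockOf (hP : IsSetPartition S P) (ha : a ∈ S) :
    ∀ C ∈ P.erase (blockOf P a), Disjoint ((blockOf P a).erase a) C := fun C hC =>
  (hP.2.1 _ (hP.blockOf_mem ha) C (mem_of_mem_erase hC) (ne_of_mem_erase hC).symm).mono_left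
    (erase_subset _ _)

end IsSetPartition

section BlockSurgery

variable {S : Finset α} {P : Finset (Finset α)} {a j : α}

theorem isSetPartition_eraseFromBlock (hP : IsSetPartition S P) (ha : a ∈ S)
    (hj : j ∈ (blockOf P a).erase a) : IsSetPartition (S.erase a) (eraseFromBlock P a) := by
  have h := hP.replace (hP.blockOf_mem ha) ⟨j, hj⟩ (hP.disjoint_erase_blockOf ha)
  have hS : (blockOf P a).erase a ∪ S \ blockOf P a = S.erase a := by
    conv_rhs => rw [← union_sdiff_of_subset (hP.subset (hP.blockOf_mem ha))]
    rw [erase_union_distrib, erase_eq_of_notMem (notMem_sdiff_of_mem_right (hP.mem_blockOf ha))]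
  rwa [hS] at h

theorem notMem_erase_erase_blockOf (hP : IsSetPartition S P) (ha : a ∈ S)
    (hj : j ∈ (blockOf P a).erase a) : (blockOf P a).erase a ∉ P.erase (blockOf P a) :=
  IsSetPartition.notMem_erase_of_disjoint ⟨j, hj⟩ (hP.disjoint_erase_blockOf ha)

theorem card_eraseFromBlock (hP : IsSetPartition S P) (ha : a ∈ S)
    (hj : j ∈ (blockOf P a).erase a) : #(eraseFromBlock P a) = #P := by
  have hB := hP.blockOf_mem ha
  rw [eraseFromBlock, card_insert_of_notMem (notMem_erase_erase_blockOf hP ha hj),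
    card_erase_of_mem hB, Nat.sub_add_cancel (card_pos.mpr ⟨_, hB⟩)]

theorem insertIntoBlock_eraseFromBlock (hP : IsSetPartition S P) (ha : a ∈ S)
    (hj : j ∈ (blockOf P a).erase a) : insertIntoBlock (eraseFromBlock P a) a j = P := by
  have hblock : blockOf (eraseFromBlock P a) j = (blockOf P a).erase a :=
    (isSetPartition_eraseFromBlock hP ha hj).blockOf_eq (mem_insert_self _ _) hj
  rw [insertIntoBlock, hblock, insert_erase (hP.mem_blockOf ha), eraseFromBlock,
    erase_insert (notMem_erase_erase_blockOf hP ha hj), insert_erase (hP.blockOf_mem ha)]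

theorem disjoint_insert_blockOf (hP : IsSetPartition (S.erase a) P) (hj : j ∈ S.erase a) :
    ∀ C ∈ P.erase (blockOf P j), Disjoint (insert a (blockOf P j)) C := fun C hC =>
  disjoint_insert_left.mpr
    ⟨fun haC => notMem_erase a S (hP.subset (mem_of_mem_erase hC) haC),
      hP.2.1 _ (hP.blockOf_mem hj) C (mem_of_mem_erase hC) (ne_of_mem_erase hC).symm⟩

theorem isSetPartition_insertIntoBlock (hP : IsSetPartition (S.erase a) P) (ha : a ∈ S)
    (hj : j ∈ S.erase a) : IsSetPartition S (insertIntoBlock P a j) := by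
  have h := hP.replace (hP.blockOf_mem hj) (insert_nonempty _ _) (disjoint_insert_blockOf hP hj)
  have hS : insert a (blockOf P j) ∪ S.erase a \ blockOf P j = S := by
    rw [insert_union, union_sdiff_of_subset (hP.subset (hP.blockOf_mem hj)), insert_erase ha]
  rwa [hS] at h

theorem blockOf_insertIntoBlock (hP : IsSetPartition (S.erase a) P) (ha : a ∈ S)
    (hj : j ∈ S.erase a) : blockOf (insertIntoBlock P a j) a = insert a (blockOf P j) :=
  (isSetPartition_insertIntoBlock hP ha hj).blockOf_eq (mem_insert_self _ _) (mem_insert_self _ _)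

theorem eraseFromBlock_insertIntoBlock (hP : IsSetPartition (S.erase a) P) (ha : a ∈ S)
    (hj : j ∈ S.erase a) : eraseFromBlock (insertIntoBlock P a j) a = P := by
  have hB := hP.blockOf_mem hj
  have haB : a ∉ blockOf P j := fun h => notMem_erase a S (hP.subset hB h)
  rw [eraseFromBlock, blockOf_insertIntoBlock hP ha hj, insertIntoBlock,
    erase_insert (IsSetPartition.notMem_erase_of_disjoint (insert_nonempty _ _)
      (disjoint_insert_blockOf hP hj)), erase_insert haB, insert_erase hB]

theorem sum_eraseFromBlock [Fintype α] {M : Type*} [AddCommMonoid M]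
    (f : Finset (Finset α) → M) (ha : a ∈ S) (hj : j ∈ S.erase a) :
    ∑ P ∈ partitionsOf S with j ∈ blockOf P a, f (eraseFromBlock P a) =
      ∑ P ∈ partitionsOf (S.erase a), f P := by
  have hj' : ∀ P, j ∈ blockOf P a → j ∈ (blockOf P a).erase a := fun P h =>
    mem_erase.mpr ⟨ne_of_mem_erase hj, h⟩
  refine sum_nbij' (eraseFromBlock · a) (insertIntoBlock · a j) ?_ ?_ ?_ ?_ fun _ _ => rfl
  · simp only [mem_filter, mem_partitionsOf]
    rintro P ⟨hP, hjP⟩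
    exact isSetPartition_eraseFromBlock hP ha (hj' P hjP)
  · simp only [mem_filter, mem_partitionsOf]
    intro P hP
    refine ⟨isSetPartition_insertIntoBlock hP ha hj, ?_⟩
    rw [blockOf_insertIntoBlock hP ha hj]
    exact mem_insert_of_mem (hP.mem_blockOf hj)
  · simp only [mem_filter, mem_partitionsOf]
    rintro P ⟨hP, hjP⟩
    exact insertIntoBlock_eraseFromBlock hP ha (hj' P hjP)
  · simp only [mem_partitionsOf]
    intro P hP
    exact eraseFromBlock_insertIntoBlock hP ha hj

end BlockSurgery

def blockWeight (e : α → ℕ) (B : Finset α) : ℕ :=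
  (∑ k ∈ B, e k).ascFactorial (#B - 1)

def partitionSum [Fintype α] (e : α → ℕ) (S : Finset α) : ℕ :=
  ∑ P ∈ partitionsOf S, (#P - 1)! * ∏ B ∈ P, blockWeight e B

section Weights

variable {e : α → ℕ} {S B : Finset α} {P : Finset (Finset α)} {a : α}

theorem blockWeight_update_of_notMem (h : a ∉ B) (v : ℕ) :
    blockWeight (update e a v) B = blockWeight e B := by
  rw [blockWeight, blockWeight, sum_update_of_notMem h]

theorem blockWeight_eq_add (ha : a ∈ B) (hea : e a ≠ 0) :
    blockWeight e B = blockWeight (update e a (e a - 1)) B +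
      ∑ j ∈ B.erase a, blockWeight (update e j (e j + e a)) (B.erase a) := by
  set t := ∑ k ∈ B, update e a (e a - 1) k
  have ht : ∑ k ∈ B, e k = t + 1 := (sum_update_pred_add_one ha hea).symm
  have hmerge (j) (hj : j ∈ B.erase a) :
      blockWeight (update e j (e j + e a)) (B.erase a) = (t + 1).ascFactorial (#B - 1 - 1) := by
    rw [blockWeight, sum_erase_update_add hj ha, ht, card_erase_of_mem ha]
  rw [sum_congr rfl hmerge, sum_const, card_erase_of_mem ha, smul_eq_mul, blockWeight,
    blockWeight, ht]
  exact Nat.add_one_ascFactorial_eq_add _ _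

theorem IsSetPartition.prod_blockWeight_eq_add (hP : IsSetPartition S P) (ha : a ∈ S)
    (hea : e a ≠ 0) :
    ∏ B ∈ P, blockWeight e B = ∏ B ∈ P, blockWeight (update e a (e a - 1)) B +
      ∑ j ∈ (blockOf P a).erase a,
        ∏ B ∈ eraseFromBlock P a, blockWeight (update e j (e j + e a)) B := by
  set Ba := blockOf P a
  have hBa : Ba ∈ P := hP.blockOf_mem ha
  have hrest (i) (hi : i ∈ Ba) (v : ℕ) :
      ∏ C ∈ P.erase Ba, blockWeight (update e i v) C = ∏ C ∈ P.erase Ba, blockWeight e C :=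
    prod_congr rfl fun C hC => blockWeight_update_of_notMem
      (fun hiC => ne_of_mem_erase hC (hP.eq_of_mem (mem_of_mem_erase hC) hBa hiC hi)) v
  have hmerged (j) (hj : j ∈ Ba.erase a) :
      ∏ B ∈ eraseFromBlock P a, blockWeight (update e j (e j + e a)) B =
        blockWeight (update e j (e j + e a)) (Ba.erase a) * ∏ C ∈ P.erase Ba, blockWeight e C := by
    rw [eraseFromBlock, prod_insert (notMem_erase_erase_blockOf hP ha hj),
      hrest j (mem_of_mem_erase hj)]
  rw [sum_congr rfl hmerged, ← sum_mul, ← mul_prod_erase P _ hBa, ← mul_prod_erase P _ hBa,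
    hrest a (hP.mem_blockOf ha), blockWeight_eq_add (hP.mem_blockOf ha) hea, add_mul]

variable [Fintype α]

theorem partitionSum_eq_add (ha : a ∈ S) (hea : e a ≠ 0) :
    partitionSum e S = partitionSum (update e a (e a - 1)) S +
      ∑ j ∈ S.erase a, partitionSum (update e j (e j + e a)) (S.erase a) := by
  have hsummand : ∀ P ∈ partitionsOf S,
      (#P - 1)! * ∏ B ∈ P, blockWeight e B =
        (#P - 1)! * ∏ B ∈ P, blockWeight (update e a (e a - 1)) B +
          ∑ j ∈ (blockOf P a).erase a, (#(eraseFromBlock P a) - 1)! *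
            ∏ B ∈ eraseFromBlock P a, blockWeight (update e j (e j + e a)) B := by
    intro P hP
    rw [mem_partitionsOf] at hP
    rw [hP.prod_blockWeight_eq_add ha hea, mul_add, mul_sum]
    congr 1
    exact sum_congr rfl fun j hj => by rw [card_eraseFromBlock hP ha hj]
  rw [partitionSum, sum_congr rfl hsummand, sum_add_distrib,
    sum_comm' (t' := S.erase a) (s' := fun j => {P ∈ partitionsOf S | j ∈ blockOf P a})]
  · exact congrArg _ <| sum_congr rfl fun j hj => sum_eraseFromBlock
      (fun Q => (#Q - 1)! * ∏ B ∈ Q, blockWeight (update e j (e j + e a)) B) ha hj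
  · intro P j
    simp only [mem_filter, mem_erase, mem_partitionsOf]
    constructor
    · rintro ⟨hP, hja, hjP⟩
      exact ⟨⟨hP, hjP⟩, hja, hP.subset (hP.blockOf_mem ha) hjP⟩
    · rintro ⟨⟨hP, hjP⟩, hja, -⟩
      exact ⟨hP, hja, hjP⟩

theorem partitionSum_of_forall_eq_zero (he : ∀ k ∈ S, e k = 0) :
    partitionSum e S = (#S - 1)! := by
  rw [partitionSum, sum_eq_single (S.image singleton)]
  · rw [card_image_of_injective _ singleton_injective, prod_eq_one, mul_one]
    simp [blockWeight]
  · intro P hP hne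
    rw [mem_partitionsOf] at hP
    obtain ⟨B, hB, hcard⟩ : ∃ B ∈ P, 1 < #B := by
      by_contra! h
      exact hne (hP.eq_image_singleton h)
    obtain ⟨m, hm⟩ : ∃ m, #B - 1 = m + 1 := ⟨#B - 2, by omega⟩
    rw [prod_eq_zero hB, mul_zero]
    rw [blockWeight, sum_eq_zero fun k hk => he k (hP.subset hB hk), hm, Nat.zero_ascFactorial]
  · exact fun h => (h (mem_partitionsOf.mpr (isSetPartition_image_singleton S))).elim

theorem partitionSum_eq_ascFactorial (e : α → ℕ) (S : Finset α) :
    partitionSum e S = (∑ k ∈ S, e k + 1).ascFactorial (#S - 1) := by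
  by_cases h : ∃ a ∈ S, e a ≠ 0
  · obtain ⟨a, ha, hea⟩ := h
    have hdec := sum_update_pred_add_one ha hea
    have hmerge (j) (hj : j ∈ S.erase a) : partitionSum (update e j (e j + e a)) (S.erase a) =
        (∑ k ∈ S, e k + 1).ascFactorial (#S - 1 - 1) := by
      rw [partitionSum_eq_ascFactorial _ (S.erase a), sum_erase_update_add hj ha,
        card_erase_of_mem ha]
    rw [partitionSum_eq_add ha hea, partitionSum_eq_ascFactorial _ S, hdec, sum_congr rfl hmerge,
      sum_const, card_erase_of_mem ha, smul_eq_mul]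
    exact (Nat.add_one_ascFactorial_eq_add _ _).symm
  · push Not at h
    rw [partitionSum_of_forall_eq_zero h, sum_eq_zero h, zero_add, Nat.one_ascFactorial]
termination_by ∑ k ∈ S, e k + #S
decreasing_by
  · rw [sum_erase_update_add hj ha, card_erase_of_mem ha]
    have := card_pos.mpr ⟨a, ha⟩
    omega
  · omega

end Weights

theorem coefficient_C_eval (p : ℕ) (hp : 1 ≤ p) (n : Fin p → ℕ)
    (hn : ∀ j, 1 ≤ n j) (s : ℕ) (hs : s = ∑ j, n j) (hsp : p ≤ s) :
    ∑ r ∈ Finset.Icc 1 p, (r - 1).factorial *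
      ∑ P ∈ (partitionsOf (Finset.univ : Finset (Fin p))).filter
          (fun P => P.card = r),
        (s - p).factorial *
          ∏ B ∈ P, ((∑ k ∈ B, n k) - B.card).ascFactorial (B.card - 1) =
      (s - 1).factorial := by
  set e : Fin p → ℕ := fun k => n k - 1
  have hsum (B : Finset (Fin p)) : ∑ k ∈ B, n k - #B = ∑ k ∈ B, e k := by
    rw [sum_tsub_distrib B fun k _ => hn k, card_eq_sum_ones]
  have hcard (P) (hP : P ∈ partitionsOf (univ : Finset (Fin p))) : #P ∈ Icc 1 p := by
    simpa using (mem_partitionsOf.mp hP).card_mem_Icc (univ_nonempty_iff.mpr ⟨⟨0, hp⟩⟩)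
  calc _ = (s - p)! * partitionSum e univ := by
        rw [partitionSum, mul_sum, ← sum_fiberwise_of_maps_to hcard]
        refine sum_congr rfl fun r _ => ?_
        rw [mul_sum]
        refine sum_congr rfl fun P hP => ?_
        simp only [(mem_filter.mp hP).2, hsum, blockWeight]
        ring
    _ = (s - p)! * (s - p + 1).ascFactorial (p - 1) := by
        rw [partitionSum_eq_ascFactorial, ← hsum, hs, card_univ, Fintype.card_fin]
    _ = (s - 1)! := by
        rw [Nat.factorial_mul_ascFactorial]
        congr 1
        omega
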